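/- For all n ≥ 1, the parity-constrained Hanoi graph P^n is connected; moreover it is 2-connected (removal of any single vertex leaves it connected, and it has at least 3 vertices). -/

import Mathlib

/-- Parity constraint on a state: disc `d+1` (labelled `1,…,n`) may not sit on
peg `2` if it is even, nor on peg `1` if it is odd. -/
def pegOK (n : ℕ) (s : Fin n → Fin 4) : Prop :=
  ∀ d : Fin n, (Even ((d : ℕ) + 1) → s d ≠ 2) ∧ (Odd ((d : ℕ) + 1) → s d ≠ 1)

instance (n : ℕ) : DecidablePred (pegOK n) := fun s => by
  unfold pegOK; infer_instance

/-- Vertices of the parity-constrained Hanoi graph `P^n`. -/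
abbrev PVertex (n : ℕ) := {s : Fin n → Fin 4 // pegOK n s}

/-- The parity-constrained four-peg Hanoi graph `P^n`: two states are adjacent iff
they differ in exactly one coordinate `d` (a legal move of disc `d+1`) and no
smaller disc sits on either of the two pegs involved. -/
def PGraph (n : ℕ) : SimpleGraph (PVertex n) where
  Adj s t := ∃ d : Fin n,
    s.1 d ≠ t.1 d ∧ (∀ k, k ≠ d → s.1 k = t.1 k) ∧
    (∀ k, k < d → s.1 k ≠ s.1 d ∧ s.1 k ≠ t.1 d)
  symm := by
    constructor
    rintro s t ⟨d, hne, heq, hlt⟩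
    refine ⟨d, hne.symm, fun k hk => (heq k hk).symm, fun k hk => ?_⟩
    have h := hlt k hk
    rw [← heq k (ne_of_lt hk)]
    exact ⟨h.2, h.1⟩
  loopless := by constructor; rintro s ⟨d, hne, -⟩; exact hne rfl

instance (n : ℕ) : DecidableRel (PGraph n).Adj := fun s t =>
  decidable_of_iff (∃ d : Fin n,
    s.1 d ≠ t.1 d ∧ (∀ k, k ≠ d → s.1 k = t.1 k) ∧
    (∀ k, k < d → s.1 k ≠ s.1 d ∧ s.1 k ≠ t.1 d)) Iff.rfl

/-! Sorting the states of `P^(n+1)` by the peg of the largest disc splits the graph into three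
copies of `P^n` (largest disc on `0`, on its parity peg `p(n)`, or on `3`), embedded by
`PVertex.snoc`. The largest disc can move between pegs `a` and `b` exactly when all smaller discs
avoid both. For `a ∈ {0, 3}` and `b = p(n)` there are two such configurations: all smaller discs
on the other peg of `{0, 3}`, possibly with the largest of them moved to its own parity peg,
which differs from `p(n)`. Hence after deleting any vertex each outer copy keeps an edge to the
middle copy, and by induction each copy stays connected. Since `P^n` has at least three vertices,
`2`-connectivity implies connectivity.
-/

lemma Fintype.exists_ne_ne_of_three_le_card {V : Type*} [Fintype V]
    (hV : 3 ≤ Fintype.card V) (x y : V) : ∃ w, w ≠ x ∧ w ≠ y := by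
  classical
  by_contra! h
  have hsub : (Finset.univ : Finset V) ⊆ {x, y} := fun w _ => by
    by_cases hw : w = x
    · simp [hw]
    · simp [h w hw]
  have := (Finset.card_le_card hsub).trans Finset.card_le_two
  rw [Finset.card_univ] at this
  omega

namespace SimpleGraph

variable {V W : Type*} [Fintype V] {G : SimpleGraph V} {H : SimpleGraph W}

lemma preconnected_induce_of_subsingleton_compl
    (hG : ∀ w, (G.induce {u | u ≠ w}).Preconnected) (hV : 3 ≤ Fintype.card V)
    {s : Set V} (hs : sᶜ.Subsingleton) : (G.induce s).Preconnected := by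
  classical
  rintro ⟨x, hx⟩ ⟨y, hy⟩
  obtain ⟨w, hws, hwx, hwy⟩ : ∃ w, sᶜ ⊆ {w} ∧ w ≠ x ∧ w ≠ y := by
    rcases hs.eq_empty_or_singleton with h | ⟨w, h⟩
    · obtain ⟨w, hwx, hwy⟩ := Fintype.exists_ne_ne_of_three_le_card hV x y
      exact ⟨w, by simp [h], hwx, hwy⟩
    · refine ⟨w, h.subset, ?_, ?_⟩ <;> rintro rfl <;> exact h.superset rfl ‹_›
  have hle : {u | u ≠ w} ≤ s := fun u hu => by_contra fun hus => hu (hws hus)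
  exact (hG w ⟨x, hwx.symm⟩ ⟨y, hwy.symm⟩).map (G.induceHomOfLE hle).toHom

lemma connected_of_forall_preconnected_induce_ne
    (hG : ∀ w, (G.induce {u | u ≠ w}).Preconnected) (hV : 3 ≤ Fintype.card V) :
    G.Connected where
  preconnected x y :=
    (preconnected_induce_of_subsingleton_compl hG hV (s := Set.univ) (by simp)
      ⟨x, trivial⟩ ⟨y, trivial⟩).map (Embedding.induce _).toHom
  nonempty := Fintype.card_pos_iff.1 (by omega)

lemma reachable_induce_ne_of_mem_range (f : G →g H) (hf : Function.Injective f)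
    (hG : ∀ w, (G.induce {u | u ≠ w}).Preconnected) (hV : 3 ≤ Fintype.card V) {v : W}
    {x y : ({u | u ≠ v} : Set W)} (hx : x.1 ∈ Set.range f) (hy : y.1 ∈ Set.range f) :
    (H.induce {u | u ≠ v}).Reachable x y := by
  obtain ⟨⟨_, hxv⟩, ⟨_, hyv⟩⟩ := x, y
  obtain ⟨⟨x, rfl⟩, ⟨y, rfl⟩⟩ := hx, hy
  have hs : {u | f u ≠ v}ᶜ.Subsingleton := fun a ha b hb =>
    hf ((not_not.1 ha).trans (not_not.1 hb).symm)
  exact (preconnected_induce_of_subsingleton_compl hG hV hs ⟨x, hxv⟩ ⟨y, hyv⟩).map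
    (induceHom (t := {u | u ≠ v}) f fun _ h => h)

end SimpleGraph

-- `pegOK n s` is definitionally `∀ d, PegAllowed d (s d)`.
def PegAllowed (k : ℕ) (a : Fin 4) : Prop :=
  (Even (k + 1) → a ≠ 2) ∧ (Odd (k + 1) → a ≠ 1)

def parityPeg (k : ℕ) : Fin 4 := if Even (k + 1) then 1 else 2

lemma pegAllowed_iff {k : ℕ} {a : Fin 4} :
    PegAllowed k a ↔ a = 0 ∨ a = parityPeg k ∨ a = 3 := by
  unfold PegAllowed parityPeg
  rcases Nat.even_or_odd (k + 1) with h | h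
  · simp only [h, Nat.not_odd_iff_even.2 h, if_true]
    decide +revert
  · simp only [h, Nat.not_even_iff_odd.2 h, if_false]
    decide +revert

lemma pegAllowed_zero (k : ℕ) : PegAllowed k 0 := pegAllowed_iff.2 (.inl rfl)

lemma pegAllowed_three (k : ℕ) : PegAllowed k 3 := pegAllowed_iff.2 (.inr (.inr rfl))

lemma pegAllowed_parityPeg (k : ℕ) : PegAllowed k (parityPeg k) :=
  pegAllowed_iff.2 (.inr (.inl rfl))

lemma parityPeg_ne_zero (k : ℕ) : parityPeg k ≠ 0 := by
  unfold parityPeg; split <;> decide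

lemma parityPeg_ne_three (k : ℕ) : parityPeg k ≠ 3 := by
  unfold parityPeg; split <;> decide

lemma parityPeg_succ_ne (k : ℕ) : parityPeg (k + 1) ≠ parityPeg k := by
  unfold parityPeg
  rcases Nat.even_or_odd (k + 1) with h | h
  · simp [h, Nat.even_add_one]
  · simp [Nat.not_even_iff_odd.2 h, h]

namespace PVertex

variable {n : ℕ}

def const (n : ℕ) (c : Fin 4) (hc : ∀ k, PegAllowed k c) : PVertex n :=
  ⟨fun _ => c, fun k => hc k⟩

def snoc (u : PVertex n) (a : Fin 4) (ha : PegAllowed n a) : PVertex (n + 1) :=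
  ⟨Fin.snoc u.1 a, show ∀ d : Fin (n + 1), PegAllowed d _ from Fin.forall_fin_succ'.2
    ⟨fun k => by rw [Fin.snoc_castSucc]; exact u.2 k, by rw [Fin.snoc_last]; exact ha⟩⟩

def init (u : PVertex (n + 1)) : PVertex n :=
  ⟨Fin.init u.1, fun k => u.2 k.castSucc⟩

lemma pegAllowed_last (u : PVertex (n + 1)) : PegAllowed n (u.1 (Fin.last n)) :=
  u.2 (Fin.last n)

@[simp] lemma snoc_castSucc (u : PVertex n) (a : Fin 4) (ha : PegAllowed n a) (k : Fin n) :
    (u.snoc a ha).1 k.castSucc = u.1 k := by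
  simp [snoc]

@[simp] lemma snoc_last (u : PVertex n) (a : Fin 4) (ha : PegAllowed n a) :
    (u.snoc a ha).1 (Fin.last n) = a := by
  simp [snoc]

@[simp] lemma init_snoc (u : PVertex n) (a : Fin 4) (ha : PegAllowed n a) :
    (u.snoc a ha).init = u :=
  Subtype.ext (by simp [snoc, init])

lemma snoc_init_eq {u : PVertex (n + 1)} {a : Fin 4} {ha : PegAllowed n a}
    (h : u.1 (Fin.last n) = a) : u.init.snoc a ha = u := by
  subst h
  exact Subtype.ext (Fin.snoc_init_self u.1)

lemma snoc_injective {a : Fin 4} (ha : PegAllowed n a) :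
    Function.Injective fun u : PVertex n => u.snoc a ha := fun u w h => by
  simpa using congrArg init h

lemma snoc_ne_of_init_ne {u : PVertex n} {a : Fin 4} {ha : PegAllowed n a} {v : PVertex (n + 1)}
    (h : u ≠ v.init) : u.snoc a ha ≠ v := by
  rintro rfl; simp at h

lemma snoc_ne_snoc {u w : PVertex n} {a b : Fin 4} {ha : PegAllowed n a} {hb : PegAllowed n b}
    (h : a ≠ b) : u.snoc a ha ≠ w.snoc b hb := by
  intro huw; exact h (by simpa using congrArg (·.1 (Fin.last n)) huw)

lemma three_le_card (n : ℕ) : 3 ≤ Fintype.card (PVertex (n + 1)) := by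
  classical
  let t := const n 0 pegAllowed_zero
  have h := Finset.card_eq_three.2 ⟨t.snoc 0 (pegAllowed_zero n),
    t.snoc _ (pegAllowed_parityPeg n), t.snoc 3 (pegAllowed_three n),
    snoc_ne_snoc (parityPeg_ne_zero n).symm, snoc_ne_snoc (by decide),
    snoc_ne_snoc (parityPeg_ne_three n), rfl⟩
  exact h ▸ Finset.card_le_univ _

lemma exists_ne_forall_ne {m : ℕ} (w : PVertex (m + 1)) {a : Fin 4} (ha : a = 0 ∨ a = 3) :
    ∃ M : PVertex (m + 1), M ≠ w ∧ ∀ k, M.1 k ≠ a ∧ M.1 k ≠ parityPeg (m + 1) := by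
  obtain ⟨c, hc, hca, hcp⟩ :
      ∃ c, (∀ k, PegAllowed k c) ∧ c ≠ a ∧ ∀ k, c ≠ parityPeg k := by
    rcases ha with rfl | rfl
    · exact ⟨3, pegAllowed_three, by decide, fun k => (parityPeg_ne_three k).symm⟩
    · exact ⟨0, pegAllowed_zero, by decide, fun k => (parityPeg_ne_zero k).symm⟩
  have hpa : parityPeg m ≠ a := by
    rcases ha with rfl | rfl
    exacts [parityPeg_ne_zero m, parityPeg_ne_three m]
  let t := const m c hc
  have avoid : ∀ b (hb : PegAllowed m b), b ≠ a → b ≠ parityPeg (m + 1) →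
      ∀ k, (t.snoc b hb).1 k ≠ a ∧ (t.snoc b hb).1 k ≠ parityPeg (m + 1) :=
    fun b hb hba hbp => Fin.forall_fin_succ'.2
      ⟨fun k => by simpa [t, const] using ⟨hca, hcp _⟩, by simpa using ⟨hba, hbp⟩⟩
  by_cases hw : t.snoc c (hc m) = w
  · exact ⟨t.snoc _ (pegAllowed_parityPeg m), hw ▸ snoc_ne_snoc (hcp m).symm,
      avoid _ _ hpa (parityPeg_succ_ne m).symm⟩
  · exact ⟨_, hw, avoid _ _ hca (hcp _)⟩

end PVertex

open PVertex

namespace PGraph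

open SimpleGraph

section

variable {n : ℕ}

lemma adj_snoc_of_adj {u w : PVertex n} {a : Fin 4} (ha : PegAllowed n a)
    (h : (PGraph n).Adj u w) : (PGraph (n + 1)).Adj (u.snoc a ha) (w.snoc a ha) := by
  obtain ⟨d, hd, heq, hlt⟩ := h
  refine ⟨d.castSucc, by simpa using hd,
    Fin.forall_fin_succ'.2 ⟨fun k hk => ?_, fun _ => by simp⟩,
    Fin.forall_fin_succ'.2 ⟨fun k hk => by simpa using hlt k (by simpa using hk), ?_⟩⟩
  · simpa using heq k (by simpa using hk)
  · exact fun h => absurd h (Fin.le_last _).not_gt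

lemma adj_snoc_snoc {u : PVertex n} {a b : Fin 4} (ha : PegAllowed n a)
    (hb : PegAllowed n b) (hab : a ≠ b) (hu : ∀ k, u.1 k ≠ a ∧ u.1 k ≠ b) :
    (PGraph (n + 1)).Adj (u.snoc a ha) (u.snoc b hb) := by
  refine ⟨Fin.last n, by simpa using hab, Fin.forall_fin_succ'.2 ⟨fun k _ => by simp, ?_⟩,
    Fin.forall_fin_succ'.2 ⟨fun k _ => by simpa using hu k, fun h => absurd h (lt_irrefl _)⟩⟩
  exact fun h => (h rfl).elim

def snocHom {a : Fin 4} (ha : PegAllowed n a) : PGraph n →g PGraph (n + 1) where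
  toFun u := u.snoc a ha
  map_rel' := adj_snoc_of_adj ha

lemma adj_of_ne {u w : PVertex 1} (h : u ≠ w) : (PGraph 1).Adj u w :=
  ⟨0, fun h0 => h (Subtype.ext (funext (Fin.forall_fin_one.2 h0))),
    fun k hk => absurd (Subsingleton.elim k 0) hk, fun k hk => absurd hk (Fin.not_lt_zero k)⟩

lemma reachable_induce_ne_of_last_eq
    (hP : ∀ w : PVertex n, ((PGraph n).induce {u | u ≠ w}).Preconnected)
    (hcard : 3 ≤ Fintype.card (PVertex n)) {v : PVertex (n + 1)}
    (x y : ({u | u ≠ v} : Set (PVertex (n + 1))))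
    (hxy : x.1.1 (Fin.last n) = y.1.1 (Fin.last n)) :
    ((PGraph (n + 1)).induce {u | u ≠ v}).Reachable x y :=
  reachable_induce_ne_of_mem_range (snocHom x.1.pegAllowed_last)
    (snoc_injective x.1.pegAllowed_last) hP hcard
    ⟨x.1.init, snoc_init_eq (ha := x.1.pegAllowed_last) rfl⟩
    ⟨y.1.init, snoc_init_eq (ha := x.1.pegAllowed_last) hxy.symm⟩

end

lemma preconnected_induce_ne_succ {m : ℕ}
    (hP : ∀ w : PVertex (m + 1), ((PGraph (m + 1)).induce {u | u ≠ w}).Preconnected)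
    (v : PVertex (m + 2)) : ((PGraph (m + 2)).induce {u | u ≠ v}).Preconnected := by
  have same_copy := reachable_induce_ne_of_last_eq hP (three_le_card m) (v := v)
  have to_hub : ∀ x : ({u | u ≠ v} : Set _), ∃ y : ({u | u ≠ v} : Set _),
      y.1.1 (Fin.last _) = parityPeg (m + 1) ∧
        ((PGraph (m + 2)).induce {u | u ≠ v}).Reachable x y := by
    rintro ⟨x, hx⟩
    by_cases hxp : x.1 (Fin.last _) = parityPeg (m + 1)
    · exact ⟨⟨x, hx⟩, hxp, .rfl⟩
    have ha : x.1 (Fin.last _) = 0 ∨ x.1 (Fin.last _) = 3 := by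
      rcases pegAllowed_iff.1 x.pegAllowed_last with h | h | h <;> tauto
    obtain ⟨M, hMv, hM⟩ := exists_ne_forall_ne v.init ha
    let e := M.snoc _ x.pegAllowed_last
    let f := M.snoc _ (pegAllowed_parityPeg (m + 1))
    have he : e ≠ v := snoc_ne_of_init_ne hMv
    have hf : f ≠ v := snoc_ne_of_init_ne hMv
    have hef : ((PGraph (m + 2)).induce {u | u ≠ v}).Adj ⟨e, he⟩ ⟨f, hf⟩ :=
      adj_snoc_snoc x.pegAllowed_last (pegAllowed_parityPeg _) hxp hM
    exact ⟨⟨f, hf⟩, by simp [f],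
      (same_copy ⟨x, hx⟩ ⟨e, he⟩ (by simp [e])).trans hef.reachable⟩
  intro x y
  obtain ⟨x', hx', hxx'⟩ := to_hub x
  obtain ⟨y', hy', hyy'⟩ := to_hub y
  exact hxx'.trans ((same_copy x' y' (hx'.trans hy'.symm)).trans hyy'.symm)

lemma preconnected_induce_ne_one (v : PVertex 1) :
    ((PGraph 1).induce {u | u ≠ v}).Preconnected := fun x y =>
  if h : x = y then h ▸ .rfl else
    Adj.reachable (G := (PGraph 1).induce _) (adj_of_ne fun hxy => h (Subtype.ext hxy))

lemma preconnected_induce_ne (n : ℕ) :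
    ∀ v : PVertex (n + 1), ((PGraph (n + 1)).induce {u | u ≠ v}).Preconnected := by
  induction n with
  | zero => exact preconnected_induce_ne_one
  | succ m ih => exact preconnected_induce_ne_succ ih

end PGraph

/-- For `n ≥ 1`, the graph `P^n` is connected, and in fact `2`-connected: it has
at least `3` vertices and remains connected after deleting any single vertex. -/
theorem stmt12 : ∀ n : ℕ, 1 ≤ n →
    (PGraph n).Connected ∧ 3 ≤ Fintype.card (PVertex n) ∧
    ∀ v : PVertex n, ((PGraph n).induce {u : PVertex n | u ≠ v}).Connected := by
  intro n hn
  obtain ⟨m, rfl⟩ : ∃ m, n = m + 1 := ⟨n - 1, by omega⟩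
  have hP := PGraph.preconnected_induce_ne m
  have hcard := PVertex.three_le_card m
  refine ⟨SimpleGraph.connected_of_forall_preconnected_induce_ne hP hcard, hcard, fun v => ?_⟩
  obtain ⟨u, hu⟩ := Fintype.exists_ne_of_one_lt_card (by omega) v
  have : Nonempty ({u | u ≠ v} : Set _) := ⟨⟨u, hu⟩⟩
  exact ⟨hP v⟩
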